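/- arXiv:2402.00471 — 2 statements merged into one kernel-verified Lean document; each statement's English description precedes it below -/
import Mathlib

section
/- For discrete random variables on a finite probability space, the increasing convex dominance constraint Y ⪯_(ic) V (meaning E[(Y − η)^+] ≤ E[(V − η)^+] for all η ∈ ℝ) holds if and only if E[(Y − v_k)^+] ≤ E[(V − v_k)^+] for every realization v_k of V. -/
/-!
Both sides are convex nonincreasing functions of `η`, and `η ↦ E[(V - η)⁺]` is affine between
consecutive realizations of `V`, so convexity of the left-hand side carries the inequality from the
two neighbouring realizations to every `η` between them. Below the smallest realization the
right-hand side grows at rate exactly `1` as `η` decreases and the left-hand side at rate at most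
`1`; above the largest one the right-hand side vanishes.
-/

open Finset

/-- `E[(X - η)⁺]` for the weights `p`. -/
noncomputable def excess {Ω : Type*} [Fintype Ω] (p X : Ω → ℝ) (η : ℝ) : ℝ :=
  ∑ ω, p ω * max (X ω - η) 0

section Pointwise

variable {y a b η : ℝ}

lemma max_sub_zero_le_add (h : a ≤ b) : max (y - a) 0 ≤ max (y - b) 0 + (b - a) := by
  have := le_max_left (y - b) 0
  have := le_max_right (y - b) 0
  exact max_le (by linarith) (by linarith)

lemma max_sub_zero_eq_add (hy : b ≤ y) (h : a ≤ b) : max (y - a) 0 = max (y - b) 0 + (b - a) := by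
  rw [max_eq_left (by linarith), max_eq_left (by linarith)]
  ring

lemma sub_mul_max_sub_zero_le (ha : a ≤ η) (hb : η ≤ b) :
    (b - a) * max (y - η) 0 ≤ (b - η) * max (y - a) 0 + (η - a) * max (y - b) 0 := by
  have := le_max_left (y - a) 0
  have := le_max_right (y - a) 0
  have := le_max_left (y - b) 0
  have := le_max_right (y - b) 0
  rcases le_total (y - η) 0 with hy | hy
  · rw [max_eq_right hy]; nlinarith
  · rw [max_eq_left hy]; nlinarith

lemma sub_mul_max_sub_zero_eq (hy : y ≤ a ∨ b ≤ y) (ha : a ≤ η) (hb : η ≤ b) :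
    (b - a) * max (y - η) 0 = (b - η) * max (y - a) 0 + (η - a) * max (y - b) 0 := by
  rcases hy with hy | hy
  · rw [max_eq_right (by linarith), max_eq_right (by linarith), max_eq_right (by linarith)]
    ring
  · rw [max_eq_left (by linarith), max_eq_left (by linarith), max_eq_left (by linarith)]
    ring

end Pointwise

section Excess

variable {Ω : Type*} [Fintype Ω] {p X Y V : Ω → ℝ} {a b η : ℝ}

lemma excess_nonneg (hp : ∀ ω, 0 ≤ p ω) : 0 ≤ excess p X η :=
  sum_nonneg fun ω _ => mul_nonneg (hp ω) (le_max_right _ _)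

lemma excess_anti (hp : ∀ ω, 0 ≤ p ω) (h : a ≤ b) : excess p X b ≤ excess p X a := by
  unfold excess
  gcongr with ω
  exact hp ω

lemma excess_eq_zero_of_forall_le (hX : ∀ ω, X ω ≤ a) : excess p X a = 0 :=
  sum_eq_zero fun ω _ => by rw [max_eq_right (by linarith [hX ω]), mul_zero]

lemma excess_le_add (hp : ∀ ω, 0 ≤ p ω) (h : a ≤ b) :
    excess p X a ≤ excess p X b + (b - a) * ∑ ω, p ω := by
  unfold excess
  rw [mul_sum, ← sum_add_distrib]
  gcongr with ω
  calc p ω * max (X ω - a) 0 ≤ p ω * (max (X ω - b) 0 + (b - a)) :=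
        mul_le_mul_of_nonneg_left (max_sub_zero_le_add h) (hp ω)
    _ = _ := by ring

lemma excess_eq_add_of_forall_le (hX : ∀ ω, b ≤ X ω) (h : a ≤ b) :
    excess p X a = excess p X b + (b - a) * ∑ ω, p ω := by
  unfold excess
  rw [mul_sum, ← sum_add_distrib]
  refine sum_congr rfl fun ω _ => ?_
  rw [max_sub_zero_eq_add (hX ω) h]
  ring

lemma sub_mul_excess_le (hp : ∀ ω, 0 ≤ p ω) (ha : a ≤ η) (hb : η ≤ b) :
    (b - a) * excess p X η ≤ (b - η) * excess p X a + (η - a) * excess p X b := by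
  unfold excess
  simp only [mul_sum, ← sum_add_distrib]
  gcongr with ω
  calc (b - a) * (p ω * max (X ω - η) 0) = p ω * ((b - a) * max (X ω - η) 0) := by ring
    _ ≤ p ω * ((b - η) * max (X ω - a) 0 + (η - a) * max (X ω - b) 0) :=
        mul_le_mul_of_nonneg_left (sub_mul_max_sub_zero_le ha hb) (hp ω)
    _ = _ := by ring

lemma sub_mul_excess_eq (hX : ∀ ω, X ω ≤ a ∨ b ≤ X ω) (ha : a ≤ η) (hb : η ≤ b) :
    (b - a) * excess p X η = (b - η) * excess p X a + (η - a) * excess p X b := by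
  unfold excess
  simp only [mul_sum, ← sum_add_distrib]
  refine sum_congr rfl fun ω _ => ?_
  linear_combination p ω * sub_mul_max_sub_zero_eq (hX ω) ha hb

lemma excess_le_excess_of_forall_le (hp : ∀ ω, 0 ≤ p ω) (hV : ∀ ω, V ω ≤ a) (h : a ≤ η)
    (ha : excess p Y a ≤ excess p V a) : excess p Y η ≤ excess p V η :=
  calc excess p Y η ≤ excess p Y a := excess_anti hp h
    _ ≤ excess p V a := ha
    _ = 0 := excess_eq_zero_of_forall_le hV
    _ ≤ excess p V η := excess_nonneg hp

lemma excess_le_excess_of_forall_ge (hp : ∀ ω, 0 ≤ p ω) (hV : ∀ ω, b ≤ V ω) (h : η ≤ b)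
    (hb : excess p Y b ≤ excess p V b) : excess p Y η ≤ excess p V η :=
  calc excess p Y η ≤ excess p Y b + (b - η) * ∑ ω, p ω := excess_le_add hp h
    _ ≤ excess p V b + (b - η) * ∑ ω, p ω := by gcongr
    _ = excess p V η := (excess_eq_add_of_forall_le hV h).symm

lemma excess_le_excess_of_gap (hp : ∀ ω, 0 ≤ p ω) (hV : ∀ ω, V ω ≤ a ∨ b ≤ V ω)
    (haη : a ≤ η) (hηb : η ≤ b) (ha : excess p Y a ≤ excess p V a)
    (hb : excess p Y b ≤ excess p V b) : excess p Y η ≤ excess p V η := by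
  rcases haη.eq_or_lt with rfl | hlt
  · exact ha
  refine le_of_mul_le_mul_left ?_ (sub_pos.2 (hlt.trans_le hηb))
  calc (b - a) * excess p Y η ≤ (b - η) * excess p Y a + (η - a) * excess p Y b :=
        sub_mul_excess_le hp haη hηb
    _ ≤ (b - η) * excess p V a + (η - a) * excess p V b := by gcongr
    _ = (b - a) * excess p V η := (sub_mul_excess_eq hV haη hηb).symm

end Excess

theorem increasing_convex_dominance_iff_realizations_general
    {Ω : Type*} [Fintype Ω] (p : Ω → ℝ)
    (hp : ∀ ω, 0 < p ω)
    (Y V : Ω → ℝ) :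
    (∀ η : ℝ, ∑ ω, p ω * max (Y ω - η) 0 ≤ ∑ ω, p ω * max (V ω - η) 0)
    ↔ (∀ ω₀ : Ω, ∑ ω, p ω * max (Y ω - V ω₀) 0 ≤
        ∑ ω, p ω * max (V ω - V ω₀) 0) := by
  change (∀ η, excess p Y η ≤ excess p V η) ↔ ∀ ω₀, excess p Y (V ω₀) ≤ excess p V (V ω₀)
  refine ⟨fun h ω₀ => h (V ω₀), fun h η => ?_⟩
  have hp' : ∀ ω, 0 ≤ p ω := fun ω => (hp ω).le
  by_cases hb : ∃ ω, η ≤ V ω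
  · obtain ⟨ω₂, hηb, hb_min⟩ := Set.exists_min_image {ω | η ≤ V ω} V (Set.toFinite _) hb
    by_cases ha : ∃ ω, V ω ≤ η
    · obtain ⟨ω₁, haη, ha_max⟩ := Set.exists_max_image {ω | V ω ≤ η} V (Set.toFinite _) ha
      refine excess_le_excess_of_gap hp' (fun ω => ?_) haη hηb (h ω₁) (h ω₂)
      rcases le_total (V ω) η with hω | hω
      exacts [Or.inl (ha_max ω hω), Or.inr (hb_min ω hω)]
    · push Not at ha
      exact excess_le_excess_of_forall_ge hp' (fun ω => hb_min ω (ha ω).le) hηb (h ω₂)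
  · push Not at hb
    rcases isEmpty_or_nonempty Ω with _ | _
    · simp [excess]
    obtain ⟨ω₁, ha_max⟩ := Finite.exists_max V
    exact excess_le_excess_of_forall_le hp' ha_max (hb ω₁).le (h ω₁)

/-- On a finite probability space, increasing convex dominance
`Y ⪯₍ᵢ꜀₎ V` holds iff the defining inequality holds at every realization of `V`. -/
theorem increasing_convex_dominance_iff_realizations
    {Ω : Type*} [Fintype Ω] (p : Ω → ℝ)
    (hp : ∀ ω, 0 < p ω) (hsum : ∑ ω, p ω = 1)
    (Y V : Ω → ℝ) :
    (∀ η : ℝ, ∑ ω, p ω * max (Y ω - η) 0 ≤ ∑ ω, p ω * max (V ω - η) 0)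
    ↔ (∀ ω₀ : Ω, ∑ ω, p ω * max (Y ω - V ω₀) 0 ≤
        ∑ ω, p ω * max (V ω - V ω₀) 0) :=
  increasing_convex_dominance_iff_realizations_general p hp Y V
end

section
/- Let Y, V be random variables on a finite probability space with V having realizations v_1,…,v_K. Then Y ⪯_(ic) V holds if and only if there exist nonnegative reals s_{ω,k} ≥ 0 with s_{ω,k} ≥ Y(ω) − v_k for all ω, k, and ∑_ω ℙ(ω) s_{ω,k} ≤ E[(V − v_k)^+] for all k. -/
/-!
The slacks are feasible exactly when they dominate `(Y ω − v k)⁺`, so the constraints say that the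
stop-loss transform `π_Y(η) = E[(Y − η)⁺]` is at most `π_V` at the atoms of `V`. That suffices:
`π_V` vanishes to the right of the largest atom, has slope `−1` to the left of the smallest one and
is affine between consecutive atoms, whereas `π_Y` is nonnegative, antitone, of slope at least `−1`,
and convex.
-/

open Finset Set

section StopLoss

variable {Ω : Type*} [Fintype Ω] (p : Ω → ℝ)

def stopLoss (X : Ω → ℝ) (η : ℝ) : ℝ := ∑ ω, p ω * max (X ω - η) 0

variable {p}

theorem stopLoss_nonneg (hp : ∀ ω, 0 ≤ p ω) (X : Ω → ℝ) (η : ℝ) : 0 ≤ stopLoss p X η :=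
  sum_nonneg fun ω _ => mul_nonneg (hp ω) (le_max_right _ _)

theorem stopLoss_antitone (hp : ∀ ω, 0 ≤ p ω) (X : Ω → ℝ) : Antitone (stopLoss p X) :=
  fun _ _ hηθ => sum_le_sum fun ω _ =>
    mul_le_mul_of_nonneg_left (max_le_max_right 0 (sub_le_sub_left hηθ _)) (hp ω)

theorem stopLoss_le_of_le_slack (hp : ∀ ω, 0 ≤ p ω) {X s : Ω → ℝ} {η : ℝ}
    (hs₀ : ∀ ω, 0 ≤ s ω) (hs : ∀ ω, X ω - η ≤ s ω) : stopLoss p X η ≤ ∑ ω, p ω * s ω :=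
  sum_le_sum fun ω _ => mul_le_mul_of_nonneg_left (max_le (hs ω) (hs₀ ω)) (hp ω)

theorem stopLoss_eq_zero {X : Ω → ℝ} {η : ℝ} (h : ∀ ω, X ω ≤ η) : stopLoss p X η = 0 :=
  sum_eq_zero fun ω _ => by rw [max_eq_right (sub_nonpos.2 (h ω)), mul_zero]

theorem stopLoss_le_add_sub (hp : ∀ ω, 0 ≤ p ω) (hsum : ∑ ω, p ω = 1) (X : Ω → ℝ)
    {η θ : ℝ} (hηθ : η ≤ θ) : stopLoss p X η ≤ stopLoss p X θ + (θ - η) :=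
  calc stopLoss p X η ≤ ∑ ω, p ω * (max (X ω - θ) 0 + (θ - η)) :=
        sum_le_sum fun ω _ => mul_le_mul_of_nonneg_left
          (max_le (by linarith [le_max_left (X ω - θ) 0]) (by linarith [le_max_right (X ω - θ) 0]))
          (hp ω)
    _ = stopLoss p X θ + (θ - η) := by
        simp only [stopLoss, mul_add, sum_add_distrib, ← sum_mul, hsum, one_mul]

theorem stopLoss_eq_add_sub (hsum : ∑ ω, p ω = 1) {X : Ω → ℝ} {η θ : ℝ} (hηθ : η ≤ θ)
    (h : ∀ ω, θ ≤ X ω) : stopLoss p X η = stopLoss p X θ + (θ - η) := by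
  rw [stopLoss, stopLoss, ← one_mul (θ - η), ← hsum, sum_mul, ← sum_add_distrib]
  refine sum_congr rfl fun ω _ => ?_
  rw [max_eq_left (by linarith [h ω]), max_eq_left (sub_nonneg.2 (h ω))]
  ring

theorem convexOn_stopLoss (hp : ∀ ω, 0 ≤ p ω) (X : Ω → ℝ) : ConvexOn ℝ univ (stopLoss p X) := by
  refine ⟨convex_univ, fun x _ y _ a b ha hb hab => ?_⟩
  have hposPart (c : ℝ) : ConvexOn ℝ univ fun η => max (c - η) 0 :=
    ((convexOn_const c convex_univ).sub (concaveOn_id convex_univ)).sup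
      (convexOn_const 0 convex_univ)
  simp only [stopLoss, smul_eq_mul, mul_sum, ← sum_add_distrib]
  refine sum_le_sum fun ω _ => ?_
  calc p ω * max (X ω - (a * x + b * y)) 0
      ≤ p ω * (a * max (X ω - x) 0 + b * max (X ω - y) 0) :=
        mul_le_mul_of_nonneg_left ((hposPart (X ω)).2 trivial trivial ha hb hab) (hp ω)
    _ = _ := by ring

theorem stopLoss_combo_of_gap {X : Ω → ℝ} {a b l u : ℝ} (hab : a ≤ b) (hl : 0 ≤ l) (hu : 0 ≤ u)
    (hlu : l + u = 1) (hgap : ∀ ω, X ω ≤ a ∨ b ≤ X ω) :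
    stopLoss p X (l * a + u * b) = l * stopLoss p X a + u * stopLoss p X b := by
  simp only [stopLoss, mul_sum, ← sum_add_distrib]
  refine sum_congr rfl fun ω _ => ?_
  have hcomb : l * a + u * a = a := by rw [← add_mul, hlu, one_mul]
  have hua : u * a ≤ u * b := mul_le_mul_of_nonneg_left hab hu
  have hlb : l * a ≤ l * b := mul_le_mul_of_nonneg_left hab hl
  have hcomb' : l * b + u * b = b := by rw [← add_mul, hlu, one_mul]
  rcases hgap ω with h | h
  · rw [max_eq_right (by linarith), max_eq_right (by linarith), max_eq_right (by linarith)]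
    ring
  · rw [max_eq_left (by linarith), max_eq_left (by linarith), max_eq_left (by linarith)]
    linear_combination (-(p ω * X ω)) * hlu

theorem stopLoss_le_of_gap (hp : ∀ ω, 0 ≤ p ω) {Y V : Ω → ℝ} {a b η : ℝ} (haη : a ≤ η)
    (hηb : η ≤ b) (hgap : ∀ ω, V ω ≤ a ∨ b ≤ V ω) (ha : stopLoss p Y a ≤ stopLoss p V a)
    (hb : stopLoss p Y b ≤ stopLoss p V b) : stopLoss p Y η ≤ stopLoss p V η := by
  have hab := haη.trans hηb
  obtain ⟨l, u, hl, hu, hlu, rfl⟩ : η ∈ segment ℝ a b := by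
    rw [segment_eq_Icc hab]
    exact ⟨haη, hηb⟩
  calc stopLoss p Y (l • a + u • b) ≤ l * stopLoss p Y a + u * stopLoss p Y b :=
        (convexOn_stopLoss hp Y).2 trivial trivial hl hu hlu
    _ ≤ l * stopLoss p V a + u * stopLoss p V b := by gcongr
    _ = stopLoss p V (l • a + u • b) := (stopLoss_combo_of_gap hab hl hu hlu hgap).symm

theorem stopLoss_le_of_le_at_values (hp : ∀ ω, 0 ≤ p ω) (hsum : ∑ ω, p ω = 1) {Y V : Ω → ℝ}
    (h : ∀ ω, stopLoss p Y (V ω) ≤ stopLoss p V (V ω)) (η : ℝ) :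
    stopLoss p Y η ≤ stopLoss p V η := by
  have : Nonempty Ω := by
    by_contra hΩ
    simp [not_nonempty_iff.1 hΩ] at hsum
  by_cases habove : ∀ ω, V ω ≤ η
  · obtain ⟨ω₀, hω₀⟩ := Finite.exists_max V
    calc stopLoss p Y η ≤ stopLoss p Y (V ω₀) := stopLoss_antitone hp Y (habove ω₀)
      _ ≤ stopLoss p V (V ω₀) := h ω₀
      _ = 0 := stopLoss_eq_zero hω₀
      _ ≤ stopLoss p V η := stopLoss_nonneg hp V η
  by_cases hbelow : ∀ ω, η ≤ V ω
  · obtain ⟨ω₀, hω₀⟩ := Finite.exists_min V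
    calc stopLoss p Y η ≤ stopLoss p Y (V ω₀) + (V ω₀ - η) :=
          stopLoss_le_add_sub hp hsum Y (hbelow ω₀)
      _ ≤ stopLoss p V (V ω₀) + (V ω₀ - η) := by gcongr; exact h ω₀
      _ = stopLoss p V η := (stopLoss_eq_add_sub hsum (hbelow ω₀) hω₀).symm
  push Not at habove hbelow
  obtain ⟨ω₁, hω₁⟩ := hbelow
  obtain ⟨ω₂, hω₂⟩ := habove
  obtain ⟨ωa, hωa, hmax⟩ :=
    exists_max_image {ω | V ω ≤ η} V ⟨ω₁, by simpa using hω₁.le⟩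
  obtain ⟨ωb, hωb, hmin⟩ := exists_min_image {ω | η < V ω} V ⟨ω₂, by simpa using hω₂⟩
  simp only [Finset.mem_filter, Finset.mem_univ, true_and] at hωa hωb hmax hmin
  refine stopLoss_le_of_gap hp hωa hωb.le (fun ω => ?_) (h ωa) (h ωb)
  rcases le_or_gt (V ω) η with hω | hω
  exacts [Or.inl (hmax ω hω), Or.inr (hmin ω hω)]

end StopLoss

/-- Linear-programming representation of increasing convex
dominance via slack variables `s ω k ≥ (Y ω − v k)⁺`. -/
theorem increasing_convex_dominance_LP
    {Ω : Type*} [Fintype Ω] (p : Ω → ℝ)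
    (hp : ∀ ω, 0 < p ω) (hsum : ∑ ω, p ω = 1)
    (Y V : Ω → ℝ)
    {K : Type*} (v : K → ℝ) (hreal : Set.range V = Set.range v) :
    (∀ η : ℝ, ∑ ω, p ω * max (Y ω - η) 0 ≤ ∑ ω, p ω * max (V ω - η) 0)
    ↔ ∃ s : Ω → K → ℝ,
        (∀ ω k, 0 ≤ s ω k) ∧
        (∀ ω k, Y ω - v k ≤ s ω k) ∧
        (∀ k, ∑ ω, p ω * s ω k ≤ ∑ ω, p ω * max (V ω - v k) 0) := by
  have hp₀ (ω : Ω) : 0 ≤ p ω := (hp ω).le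
  constructor
  · intro h
    exact ⟨fun ω k => max (Y ω - v k) 0, fun _ _ => le_max_right _ _, fun _ _ => le_max_left _ _,
      fun k => h (v k)⟩
  · rintro ⟨s, hs₀, hs, hsum_le⟩
    refine stopLoss_le_of_le_at_values hp₀ hsum fun ω => ?_
    obtain ⟨k, hk⟩ : V ω ∈ Set.range v := hreal ▸ Set.mem_range_self ω
    rw [← hk]
    exact (stopLoss_le_of_le_slack hp₀ (hs₀ · k) (hs · k)).trans (hsum_le k)
end
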